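/- arXiv:1109.1518 — 5 statements merged into one kernel-verified Lean document; each statement's English description precedes it below -/
import Mathlib

section
/- Let m ≥ 1 be an integer. Let r ≥ s ≥ 1 be integers, let a_1, …, a_r be distinct real numbers in the open interval (0, 1/2) such that a_1, …, a_s are irrational and a_{s+1}, …, a_r are rational, and let c_1, …, c_r be nonzero real numbers. Set σ = ∑_{i=1}^r c_i S_{a_i}. If for every integer p > 1 coprime to both m and m+1 one has Σ_p(σ) = ∑_{i=1}^{p−1} σ(i/p) = 0, then the real numbers a_1, …, a_s, 1 are linearly dependent over ℚ; that is, there exist rational numbers q_1, …, q_s, q_0, not all zero, with q_1 a_1 + ⋯ + q_s a_s + q_0 = 0. -/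
/-- The characteristic-type function `χ_a`: value `1` on `[0,a)`, `1/2` at `a`, `0` after. -/
noncomputable def chiFn (a : ℝ) : ℝ → ℝ := fun x =>
  if x < a then 1 else if x = a then 1 / 2 else 0

/-- The symmetric jump function `S_a = χ_{1−a} − χ_a`. -/
noncomputable def SFn (a : ℝ) : ℝ → ℝ := fun x => chiFn (1 - a) x - chiFn a x

/-- `Σ_p(f) = ∑_{i=1}^{p−1} f(i/p)`. -/
noncomputable def SigmaP (p : ℕ) (f : ℝ → ℝ) : ℝ :=
  ∑ i ∈ Finset.Ico 1 p, f ((i : ℝ) / (p : ℝ))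

/-!
Suppose `a₁, …, a_s, 1` were linearly independent over `ℚ`. Take `M` divisible by `m (m + 1)`
and by the denominators of the rational `aᵢ`. Every `p = 1 + k M` is then admissible, fixes the
rational `aᵢ` modulo `1`, and makes no `p aᵢ` an integer; counting the `i / p` below `a` gives
`Σ_p(S_a) = p (1 - 2a) - 1 + 2 {p a}`. So the hypothesis reads
`p ∑ cᵢ (1 - 2aᵢ) - ∑ cᵢ + 2 ∑ cᵢ {p aᵢ} = 0` along the unbounded sequence of these `p`; as the
last sum is bounded, the slope vanishes and `∑_{i ≤ s} cᵢ {p aᵢ}` does not depend on `k`. Since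
its terms lie in `(0, 1)`, this constant is strictly below `∑ max(cᵢ, 0)`, yet Kronecker's theorem
moves `({p aᵢ})_{i ≤ s}` close enough to the corner of the cube where the sum approaches that value.

Kronecker's theorem comes from averaging the kernel `∏ⱼ cos (π θⱼ) ^ (2L)` along `θ = k b - w`:
independence kills every non-constant frequency, so the average tends to the constant Fourier
coefficient `(C(2L, L) / 4 ^ L) ^ s ≥ (2L + 1) ^ (-s)`, whereas the kernel is at most
`cos (π ε) ^ (2L)` at every `k` where some `θⱼ` stays `ε` away from `ℤ`.
-/

open Real Filter Topology Finset FourierTransform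

/-- `1` and the `b j` are linearly independent over `ℚ`. -/
def IntIndependentModOne {ι : Type*} [Fintype ι] (b : ι → ℝ) : Prop :=
  ∀ h : ι → ℤ, h ≠ 0 → ∀ z : ℤ, ∑ j, h j * b j ≠ z

lemma coe_fourierChar_ne_one {x : ℝ} (hx : ∀ z : ℤ, x ≠ z) : (𝐞 x : ℂ) ≠ 1 := by
  rw [fourierChar_apply, Ne, Complex.exp_eq_one_iff]
  rintro ⟨z, hz⟩
  refine hx z ?_
  have h2pi : (2 * π * Complex.I) ≠ 0 := by simp [pi_ne_zero]
  have : (x : ℂ) * (2 * π * Complex.I) = z * (2 * π * Complex.I) := by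
    push_cast at hz; linear_combination hz
  exact_mod_cast mul_right_cancel₀ h2pi this

lemma tendsto_average_fourierChar_natCast_mul {β : ℝ} (hβ : ∀ z : ℤ, β ≠ z) :
    Tendsto (fun N : ℕ => (N : ℂ)⁻¹ * ∑ k ∈ range N, (𝐞 (k * β) : ℂ)) atTop (𝓝 0) := by
  set z : ℂ := (𝐞 β : ℂ)
  have hz : z - 1 ≠ 0 := sub_ne_zero.mpr (coe_fourierChar_ne_one hβ)
  have hsum (N : ℕ) : ∑ k ∈ range N, (𝐞 (k * β) : ℂ) = (z ^ N - 1) / (z - 1) := by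
    simp_rw [← nsmul_eq_mul, AddChar.map_nsmul_eq_pow, Circle.coe_pow]
    exact geom_sum_eq (sub_ne_zero.mp hz) N
  refine squeeze_zero_norm (a := fun N : ℕ => 2 / ‖z - 1‖ / N) (fun N => ?_)
    (tendsto_const_div_atTop_nhds_zero_nat _)
  have hnum : ‖z ^ N - 1‖ ≤ 2 := by
    refine (norm_sub_le _ _).trans ?_
    rw [norm_pow, Circle.norm_coe]
    norm_num
  rw [hsum, norm_mul, norm_inv, Complex.norm_natCast, norm_div, inv_mul_eq_div]
  gcongr

lemma tendsto_average_fourierChar_sum {ι : Type*} [Fintype ι] (b w : ι → ℝ) (h : ι → ℤ)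
    (hb : h ≠ 0 → ∀ z : ℤ, ∑ j, h j * b j ≠ z) :
    Tendsto (fun N : ℕ => (N : ℂ)⁻¹ * ∑ k ∈ range N, (𝐞 (∑ j, h j * (k * b j - w j)) : ℂ))
      atTop (𝓝 (if h = 0 then 1 else 0)) := by
  split_ifs with h0
  · subst h0
    refine tendsto_const_nhds.congr' ?_
    filter_upwards [eventually_ne_atTop 0] with N hN
    simp [hN]
  · have hsplit (k : ℕ) : (𝐞 (∑ j, h j * (k * b j - w j)) : ℂ)
        = 𝐞 (-∑ j, h j * w j) * 𝐞 (k * ∑ j, h j * b j) := by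
      rw [← Circle.coe_mul, ← AddChar.map_add_eq_mul, mul_sum, ← sum_neg_distrib,
        ← sum_add_distrib]
      congr 3 with j
      ring
    simp_rw [hsplit, ← mul_sum, mul_left_comm _ (𝐞 _ : ℂ)]
    simpa using
      (tendsto_average_fourierChar_natCast_mul (hb h0)).const_mul (𝐞 (-∑ j, h j * w j) : ℂ)

lemma ofReal_cos_pi_mul_eq_fourierChar (x : ℝ) :
    ((cos (π * x) : ℝ) : ℂ) = ((𝐞 (x / 2) : ℂ) + 𝐞 (-(x / 2))) / 2 := by
  rw [Complex.ofReal_cos, Complex.cos, fourierChar_apply, fourierChar_apply]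
  congr 3 <;> push_cast <;> ring

lemma ofReal_cos_pi_mul_pow_eq_sum (x : ℝ) (L : ℕ) :
    ((cos (π * x) ^ (2 * L) : ℝ) : ℂ) =
      ∑ v ∈ range (2 * L + 1), ((2 * L).choose v / 4 ^ L : ℂ) * 𝐞 (((v : ℤ) - L) * x) := by
  rw [Complex.ofReal_pow, ofReal_cos_pi_mul_eq_fourierChar, div_pow, add_pow, sum_div]
  refine sum_congr rfl fun v hv => ?_
  have hv : v ≤ 2 * L := Nat.lt_succ_iff.mp (mem_range.mp hv)
  have hexp : (𝐞 (x / 2) : ℂ) ^ v * (𝐞 (-(x / 2)) : ℂ) ^ (2 * L - v) = 𝐞 (((v : ℤ) - L) * x) := by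
    rw [← Circle.coe_pow, ← Circle.coe_pow, ← Circle.coe_mul, ← AddChar.map_nsmul_eq_pow,
      ← AddChar.map_nsmul_eq_pow, ← AddChar.map_add_eq_mul, nsmul_eq_mul, nsmul_eq_mul,
      Nat.cast_sub hv]
    push_cast
    ring_nf
  rw [hexp, pow_mul]
  norm_num
  ring

lemma coe_fourierChar_sum {ι : Type*} (s : Finset ι) (f : ι → ℝ) :
    (𝐞 (∑ i ∈ s, f i) : ℂ) = ∏ i ∈ s, (𝐞 (f i) : ℂ) := by
  induction s using Finset.cons_induction with
  | empty => simp
  | cons i s hi ih => rw [sum_cons, prod_cons, AddChar.map_add_eq_mul, Circle.coe_mul, ih]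

lemma tendsto_average_prod_cos_pow {ι : Type*} [Fintype ι] (b w : ι → ℝ)
    (hb : IntIndependentModOne b) (L : ℕ) :
    Tendsto (fun N : ℕ => (N : ℝ)⁻¹ * ∑ k ∈ range N, ∏ j, cos (π * (k * b j - w j)) ^ (2 * L))
      atTop (𝓝 (((2 * L).choose L / 4 ^ L) ^ Fintype.card ι)) := by
  classical
  set V := Fintype.piFinset fun _ : ι => range (2 * L + 1)
  set coeff : (ι → ℕ) → ℂ := fun v => ∏ j, ((2 * L).choose (v j) / 4 ^ L : ℂ)
  set freq : (ι → ℕ) → ι → ℤ := fun v j => (v j : ℤ) - L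
  have hexpand (k : ℕ) : ((∏ j, cos (π * (k * b j - w j)) ^ (2 * L) : ℝ) : ℂ) =
      ∑ v ∈ V, coeff v * 𝐞 (∑ j, freq v j * (k * b j - w j)) := by
    simp_rw [Complex.ofReal_prod, ofReal_cos_pi_mul_pow_eq_sum, prod_univ_sum]
    refine sum_congr rfl fun v _ => ?_
    rw [prod_mul_distrib, coe_fourierChar_sum]
    simp only [coeff, freq, Int.cast_sub, Int.cast_natCast]
  have hfreq (v : ι → ℕ) : freq v = 0 ↔ v = fun _ => L := by
    simp [freq, funext_iff, sub_eq_zero]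
  rw [← tendsto_ofReal_iff]
  have hlim := tendsto_finsetSum V fun v _ =>
    (tendsto_average_fourierChar_sum b w (freq v) (hb (freq v))).const_mul (coeff v)
  convert hlim using 1
  · ext N
    simp only [Complex.ofReal_mul, Complex.ofReal_inv, Complex.ofReal_natCast, Complex.ofReal_sum]
    rw [sum_congr rfl fun k _ => hexpand k, sum_comm, mul_sum]
    refine sum_congr rfl fun v _ => ?_
    rw [← mul_sum, mul_left_comm]
  · simp_rw [hfreq, mul_ite, mul_one, mul_zero]
    rw [sum_ite_eq', if_pos (by simp [V]; omega)]
    simp [coeff, div_pow]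

lemma cos_pi_mul_sq_le {x ε : ℝ} (hε : 0 ≤ ε) (hx : ∀ z : ℤ, ε ≤ |x - z|) :
    cos (π * x) ^ 2 ≤ cos (π * ε) ^ 2 := by
  set y := x - round x
  have hy : |y| ≤ 1 / 2 := abs_sub_round x
  have hεy : ε ≤ |y| := hx (round x)
  have hcos : cos (π * x) ^ 2 = cos (π * |y|) ^ 2 := by
    rw [show π * |y| = |π * y| by rw [abs_mul, abs_of_pos pi_pos], cos_abs,
      show π * x = π * y + round x * π by ring, cos_add_int_mul_pi, mul_pow, ← zpow_natCast,
      ← zpow_mul, mul_comm (round x), zpow_mul]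
    norm_num
  have hpi := pi_pos
  rw [hcos]
  refine pow_le_pow_left₀ (cos_nonneg_of_mem_Icc ⟨by nlinarith [abs_nonneg y], by nlinarith⟩)
    (cos_le_cos_of_nonneg_of_le_pi (by positivity) (by nlinarith) (by nlinarith)) 2

lemma exists_pow_lt_centralBinom_div_pow {c : ℝ} (hc0 : 0 < c) (hc1 : c < 1) (n : ℕ) :
    ∃ L : ℕ, c ^ (2 * L) < ((2 * L).choose L / 4 ^ L : ℝ) ^ n := by
  have hlim := (tendsto_pow_const_mul_const_pow_of_abs_lt_one n
    (abs_lt.mpr ⟨by linarith, hc1⟩)).comp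
      (tendsto_atTop_mono (fun L : ℕ => show L ≤ 2 * L + 1 by omega) tendsto_id)
  obtain ⟨L, hL⟩ := (hlim.eventually (gt_mem_nhds hc0)).exists
  refine ⟨L, ?_⟩
  have hpos : (0 : ℝ) < 2 * L + 1 := by positivity
  have hsmall : (2 * L + 1 : ℝ) ^ n * c ^ (2 * L) < 1 := by
    simp only [Function.comp, pow_succ] at hL
    push_cast at hL
    nlinarith
  have hcentral : (1 / (2 * L + 1) : ℝ) ≤ (2 * L).choose L / 4 ^ L := by
    rw [div_le_div_iff₀ hpos (by positivity), one_mul, mul_comm]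
    exact_mod_cast Nat.four_pow_le_two_mul_add_one_mul_central_binom L
  calc c ^ (2 * L) < (1 / (2 * L + 1)) ^ n := by
        rw [div_pow, one_pow, lt_div_iff₀ (by positivity)]; linarith
    _ ≤ _ := pow_le_pow_left₀ (by positivity) hcentral n

theorem kronecker_approximation {ι : Type*} [Fintype ι] (b w : ι → ℝ)
    (hb : IntIndependentModOne b) {ε : ℝ} (hε : 0 < ε) :
    ∃ k : ℕ, ∀ j, ∃ z : ℤ, |k * b j - w j - z| < ε := by
  classical
  by_contra! hfar
  set δ := min ε (1 / 4)
  set c := cos (π * δ)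
  have hδ : 0 < δ := lt_min hε (by norm_num)
  have hδ' : δ ≤ 1 / 4 := min_le_right _ _
  have hpi := pi_pos
  have hc0 : 0 < c := cos_pos_of_mem_Ioo ⟨by nlinarith, by nlinarith⟩
  have hc1 : c < 1 := by
    simpa using cos_lt_cos_of_nonneg_of_le_pi le_rfl (by nlinarith) (by positivity : 0 < π * δ)
  obtain ⟨L, hL⟩ := exists_pow_lt_centralBinom_div_pow hc0 hc1 (Fintype.card ι)
  have hbound (k : ℕ) : ∏ j, cos (π * (k * b j - w j)) ^ (2 * L) ≤ c ^ (2 * L) := by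
    obtain ⟨j, hj⟩ := hfar k
    have hfactor (i : ι) : cos (π * (k * b i - w i)) ^ (2 * L) ∈ Set.Icc 0 1 := by
      rw [pow_mul]
      exact ⟨by positivity, pow_le_one₀ (sq_nonneg _) (cos_sq_le_one _)⟩
    rw [← mul_prod_erase univ _ (mem_univ j)]
    refine (mul_le_of_le_one_right (hfactor j).1
      (prod_le_one (fun i _ => (hfactor i).1) fun i _ => (hfactor i).2)).trans ?_
    rw [pow_mul, pow_mul]
    exact pow_le_pow_left₀ (sq_nonneg _)
      (cos_pi_mul_sq_le hδ.le fun z => (min_le_left _ _).trans (hj z)) L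
  have hlim := tendsto_average_prod_cos_pow b w hb L
  have hle : ((2 * L).choose L / 4 ^ L : ℝ) ^ Fintype.card ι ≤ c ^ (2 * L) := by
    refine le_of_tendsto hlim ?_
    filter_upwards [eventually_ne_atTop 0] with N hN
    rw [inv_mul_le_iff₀ (by positivity)]
    simpa using sum_le_card_nsmul (range N) _ _ fun k _ => hbound k
  linarith

lemma sigmaP_chiFn {p : ℕ} {c : ℝ} (hc0 : 0 < c) (hc1 : c < 1) (hpc : Int.fract (p * c) ≠ 0) :
    SigmaP p (chiFn c) = p * c - Int.fract (p * c) := by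
  have hp : (0 : ℝ) < p := by
    rcases Nat.eq_zero_or_pos p with rfl | hp
    · simp at hpc
    · exact_mod_cast hp
  have hterm (i : ℕ) : chiFn c (i / p) = if (i : ℝ) ≤ ⌊p * c⌋₊ then 1 else 0 := by
    have hne : (i : ℝ) ≠ p * c := fun h => hpc (Int.fract_eq_zero_iff.mpr ⟨i, by simp [h]⟩)
    have hiff : (i : ℝ) / p < c ↔ (i : ℝ) ≤ ⌊p * c⌋₊ := by
      rw [div_lt_iff₀ hp, Nat.cast_le, Nat.le_floor_iff (by positivity), mul_comm c,
        lt_iff_le_and_ne, and_iff_left hne]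
    by_cases hi : (i : ℝ) ≤ ⌊p * c⌋₊
    · simp [chiFn, hiff.mpr hi, hi]
    · have : (i : ℝ) / p ≠ c := fun h => hne (by rw [← h]; field_simp)
      simp [chiFn, hiff, hi, this]
  have hfloor : ⌊p * c⌋₊ < p := by
    rw [Nat.floor_lt (by positivity)]
    nlinarith
  have hfilter : (Ico 1 p).filter (fun i : ℕ => (i : ℝ) ≤ ⌊p * c⌋₊) = Icc 1 ⌊p * c⌋₊ := by
    ext i
    simp only [mem_filter, mem_Ico, mem_Icc, Nat.cast_le]
    omega
  rw [SigmaP, sum_congr rfl fun i _ => hterm i, sum_boole, hfilter, Nat.card_Icc,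
    Nat.add_sub_cancel, Int.self_sub_fract, ← Int.natCast_floor_eq_floor (by positivity)]
  simp

lemma sigmaP_SFn {p : ℕ} {a : ℝ} (ha : a ∈ Set.Ioo 0 1) (hpa : Int.fract (p * a) ≠ 0) :
    SigmaP p (SFn a) = p * (1 - 2 * a) - 1 + 2 * Int.fract (p * a) := by
  have hneg : Int.fract (p * (1 - a)) = 1 - Int.fract (p * a) := by
    rw [show (p : ℝ) * (1 - a) = -(p * a) + (p : ℤ) by push_cast; ring, Int.fract_add_intCast,
      Int.fract_neg hpa]
  have hsplit : SigmaP p (SFn a) = SigmaP p (chiFn (1 - a)) - SigmaP p (chiFn a) := by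
    simp only [SigmaP, SFn, sum_sub_distrib]
  have hpa' : Int.fract (p * (1 - a)) ≠ 0 := by
    rw [hneg]
    linarith [Int.fract_lt_one (p * a)]
  rw [hsplit, sigmaP_chiFn (by linarith [ha.2]) (by linarith [ha.1]) hpa',
    sigmaP_chiFn ha.1 ha.2 hpa, hneg]
  ring

lemma sigmaP_sum_mul_SFn {ι : Type*} [Fintype ι] {p : ℕ} (a c : ι → ℝ)
    (ha : ∀ i, a i ∈ Set.Ioo 0 1) (hpa : ∀ i, Int.fract (p * a i) ≠ 0) :
    SigmaP p (fun x => ∑ i, c i * SFn (a i) x) =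
      p * ∑ i, c i * (1 - 2 * a i) - ∑ i, c i + 2 * ∑ i, c i * Int.fract (p * a i) := by
  have hlin : SigmaP p (fun x => ∑ i, c i * SFn (a i) x) = ∑ i, c i * SigmaP p (SFn (a i)) := by
    simp only [SigmaP, mul_sum]
    exact sum_comm
  rw [hlin, sum_congr rfl fun i _ => by rw [sigmaP_SFn (ha i) (hpa i)], mul_sum, mul_sum,
    ← sum_sub_distrib, ← sum_add_distrib]
  exact sum_congr rfl fun i _ => by ring

lemma eq_zero_of_tendsto_atTop_of_abs_mul_le {u : ℕ → ℝ} (hu : Tendsto u atTop atTop) {A K : ℝ}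
    (h : ∀ k, |u k * A| ≤ K) : A = 0 := by
  by_contra hA
  have hlarge := (tendsto_abs_atTop_atTop.comp hu).atTop_mul_const (abs_pos.mpr hA)
  obtain ⟨k, hk⟩ := (hlarge.eventually_gt_atTop K).exists
  simp only [Function.comp, ← abs_mul] at hk
  exact (h k).not_gt hk

lemma sum_mul_fract_eq_half_of_sigmaP_eq_zero {ι : Type*} [Fintype ι] (a c : ι → ℝ)
    (ha : ∀ i, a i ∈ Set.Ioo 0 1) {p : ℕ → ℕ} (hp : Tendsto p atTop atTop)
    (hpa : ∀ k i, Int.fract (p k * a i) ≠ 0)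
    (hσ : ∀ k, SigmaP (p k) (fun x => ∑ i, c i * SFn (a i) x) = 0) (k : ℕ) :
    ∑ i, c i * Int.fract (p k * a i) = (∑ i, c i) / 2 := by
  set F : ℕ → ℝ := fun k => ∑ i, c i * Int.fract (p k * a i)
  have hrel (k : ℕ) : p k * ∑ i, c i * (1 - 2 * a i) = ∑ i, c i - 2 * F k := by
    linarith [sigmaP_sum_mul_SFn (p := p k) a c ha (hpa k), hσ k]
  have hF (k : ℕ) : |F k| ≤ ∑ i, |c i| := by
    refine (abs_sum_le_sum_abs _ _).trans (sum_le_sum fun i _ => ?_)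
    rw [abs_mul, abs_of_nonneg (Int.fract_nonneg (p k * a i))]
    exact mul_le_of_le_one_right (abs_nonneg _) (Int.fract_lt_one _).le
  have hslope : ∑ i, c i * (1 - 2 * a i) = 0 := by
    refine eq_zero_of_tendsto_atTop_of_abs_mul_le (tendsto_natCast_atTop_atTop.comp hp)
      (K := |∑ i, c i| + 2 * ∑ i, |c i|) fun k => ?_
    rw [Function.comp_apply, hrel]
    have := abs_le.mp (hF k)
    rw [abs_le]
    constructor <;> linarith [le_abs_self (∑ i, c i), neg_abs_le (∑ i, c i)]
  have := hrel k
  rw [hslope, mul_zero] at this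
  linarith

lemma sum_mul_fract_lt_sum_max {ι : Type*} [Fintype ι] [Nonempty ι] {c y : ι → ℝ}
    (hc : ∀ j, c j ≠ 0) (hy : ∀ j, Int.fract (y j) ≠ 0) :
    ∑ j, c j * Int.fract (y j) < ∑ j, max (c j) 0 := by
  refine sum_lt_sum_of_nonempty univ_nonempty fun j _ => ?_
  have hpos : 0 < Int.fract (y j) := (Int.fract_nonneg _).lt_of_ne' (hy j)
  rcases (hc j).lt_or_gt with hneg | hpos'
  · rw [max_eq_right hneg.le]
    exact mul_neg_of_neg_of_pos hneg hpos
  · rw [max_eq_left hpos'.le]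
    exact mul_lt_of_lt_one_right hpos' (Int.fract_lt_one _)

lemma exists_sum_mul_fract_gt {ι : Type*} [Fintype ι] (c x b : ι → ℝ)
    (hb : IntIndependentModOne b) {δ : ℝ} (hδ : 0 < δ) :
    ∃ k : ℕ, ∑ j, max (c j) 0 - δ < ∑ j, c j * Int.fract (x j + k * b j) := by
  set K := ∑ j, |c j|
  have hK : 0 ≤ K := sum_nonneg fun j _ => abs_nonneg _
  set ε := min (1 / 4) (δ / (2 * K + 1))
  have hε : 0 < ε := lt_min (by norm_num) (by positivity)
  have hεK : 2 * ε * K < δ := by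
    have : ε * (2 * K + 1) ≤ δ := (le_div_iff₀ (by positivity)).mp (min_le_right _ _)
    nlinarith
  -- steer `x j + k * b j` towards `1 - ε` where `c j > 0` and towards `ε` elsewhere
  set t : ι → ℝ := fun j => if 0 < c j then 1 - ε else ε
  obtain ⟨k, hk⟩ := kronecker_approximation b (fun j => t j - x j) hb hε
  refine ⟨k, ?_⟩
  have hterm (j : ι) : max (c j) 0 - 2 * ε * |c j| ≤ c j * Int.fract (x j + k * b j) := by
    obtain ⟨z, hz⟩ := hk j
    have hε4 : ε ≤ 1 / 4 := min_le_left _ _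
    have ht : ε ≤ t j ∧ t j ≤ 1 - ε := by
      simp only [t]; split_ifs <;> constructor <;> linarith
    have hclose := abs_lt.mp hz
    have hfract : Int.fract (x j + k * b j) = x j + k * b j - z :=
      Int.fract_eq_iff.mpr ⟨by linarith, by linarith, z, by ring⟩
    rw [hfract]
    by_cases hc : 0 < c j
    · have htj : t j = 1 - ε := if_pos hc
      rw [max_eq_left hc.le, abs_of_pos hc]
      nlinarith
    · have htj : t j = ε := if_neg hc
      rw [not_lt] at hc
      rw [max_eq_right hc, abs_of_nonpos hc]
      nlinarith
  calc ∑ j, max (c j) 0 - δ < ∑ j, (max (c j) 0 - 2 * ε * |c j|) := by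
        rw [sum_sub_distrib, ← mul_sum]; linarith
    _ ≤ _ := sum_le_sum fun j _ => hterm j

lemma exists_fract_one_add_mul_mul_eq {ι : Type*} [Fintype ι] {n : ℕ} (hn : 0 < n)
    (a : ι → ℝ) (ha : ∀ i, a i ∈ Set.Ico 0 1) (hrat : ∀ i, ∃ q : ℚ, a i = q) :
    ∃ M : ℕ, 0 < M ∧ n ∣ M ∧ ∀ k i, Int.fract ((1 + k * M : ℕ) * a i) = a i := by
  choose q hq using hrat
  refine ⟨n * ∏ i, (q i).den, by positivity, dvd_mul_right _ _, fun k i => ?_⟩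
  obtain ⟨e, he⟩ := dvd_prod_of_mem (fun i => (q i).den) (mem_univ i)
  have hint : ((1 + k * (n * ∏ i, (q i).den) : ℕ) : ℝ) * a i =
      a i + (k * n * e * (q i).num : ℤ) := by
    have hnum : ((q i).den : ℚ) * q i = (q i).num := by rw [mul_comm, Rat.mul_den_eq_num]
    rw [he, hq]
    exact_mod_cast (show ((1 + k * (n * ((q i).den * e)) : ℕ) : ℚ) * q i
      = q i + (k * n * e * (q i).num : ℤ) by push_cast; linear_combination (k * n * e : ℚ) * hnum)
  rw [hint, Int.fract_add_intCast, Int.fract_eq_self.mpr (ha i)]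

lemma Nat.coprime_one_add_mul_of_dvd {n M : ℕ} (h : n ∣ M) (k : ℕ) : Nat.Coprime (1 + k * M) n := by
  obtain ⟨e, rfl⟩ := h
  rw [show 1 + k * (n * e) = 1 + k * e * n by ring, Nat.coprime_add_mul_right_left]
  exact Nat.coprime_one_left n

lemma Irrational.fract_ne_zero {x : ℝ} (hx : Irrational x) : Int.fract x ≠ 0 := by
  rw [Ne, Int.fract_eq_zero_iff]
  rintro ⟨z, rfl⟩
  exact hx.ne_int z rfl

lemma exists_sum_mul_fract_add_ne {ι : Type*} [Fintype ι] [Nonempty ι] {c x b : ι → ℝ}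
    (hc : ∀ j, c j ≠ 0) (hx : ∀ j, Int.fract (x j) ≠ 0)
    (hb : IntIndependentModOne b) :
    ∃ k : ℕ, ∑ j, c j * Int.fract (x j + k * b j) ≠ ∑ j, c j * Int.fract (x j) := by
  obtain ⟨k, hk⟩ := exists_sum_mul_fract_gt c x b hb (sub_pos.mpr (sum_mul_fract_lt_sum_max hc hx))
  exact ⟨k, by linarith⟩

lemma intIndependentModOne_natCast_mul {ι : Type*} [Fintype ι] {α : ι → ℝ}
    (hα : ¬∃ (q : ι → ℚ) (q0 : ℚ), ¬(q0 = 0 ∧ ∀ i, q i = 0) ∧ ∑ i, (q i : ℝ) * α i + q0 = 0)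
    {M : ℕ} (hM : M ≠ 0) : IntIndependentModOne fun j => M * α j := by
  intro h hh z
  obtain ⟨j, hj⟩ := Function.ne_iff.mp hh
  have hsum : ∑ j, ((M * h j : ℚ) : ℝ) * α j = ∑ j, h j * (M * α j) :=
    sum_congr rfl fun j _ => by push_cast; ring
  refine fun hz => hα ⟨fun j => M * h j, -z, fun h0 => hj (by simpa [hM] using h0.2 j), ?_⟩
  rw [hsum, hz]
  push_cast
  ring

theorem stmt_4_general (m : ℕ) (hm : 1 ≤ m) (r s : ℕ) (hs : 1 ≤ s) (hsr : s ≤ r)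
    (a : Fin r → ℝ)
    (hmem : ∀ i, a i ∈ Set.Ioo (0 : ℝ) (1 / 2))
    (hirr : ∀ i : Fin r, (i : ℕ) < s → Irrational (a i))
    (hrat : ∀ i : Fin r, s ≤ (i : ℕ) → ∃ q : ℚ, a i = (q : ℝ))
    (c : Fin r → ℝ) (hc : ∀ i, c i ≠ 0)
    (h : ∀ p : ℕ, 1 < p → Nat.Coprime p m → Nat.Coprime p (m + 1) →
      SigmaP p (fun x => ∑ i, c i * SFn (a i) x) = 0) :
    ∃ (q : Fin s → ℚ) (q0 : ℚ), ¬ (q0 = 0 ∧ ∀ i, q i = 0) ∧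
      (∑ i : Fin s, (q i : ℝ) * a (Fin.castLE hsr i)) + (q0 : ℝ) = 0 := by
  by_contra hind
  obtain ⟨t, rfl⟩ := Nat.exists_eq_add_of_le hsr
  have : Nonempty (Fin s) := ⟨⟨0, hs⟩⟩
  have ha (i : Fin (s + t)) : a i ∈ Set.Ioo 0 1 := ⟨(hmem i).1, (hmem i).2.trans (by norm_num)⟩
  obtain ⟨M, hM, hdvd, hfixed⟩ := exists_fract_one_add_mul_mul_eq (n := m * (m + 1)) (by positivity)
    (fun j => a (Fin.natAdd s j)) (fun j => ⟨(ha _).1.le, (ha _).2⟩) (fun j => hrat _ (by simp))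
  set p : ℕ → ℕ := fun k => 1 + (k + 1) * M
  have hp_gt (k : ℕ) : k + 1 < p k := by simp only [p]; nlinarith
  have hp_fixed (k : ℕ) (j : Fin t) : Int.fract (p k * a (Fin.natAdd s j)) = a (Fin.natAdd s j) :=
    hfixed (k + 1) j
  have hpa (k : ℕ) (i : Fin (s + t)) : Int.fract (p k * a i) ≠ 0 := by
    refine Fin.addCases (fun j => ?_) (fun j => ?_) i
    · exact ((hirr _ (by simp)).natCast_mul (by positivity)).fract_ne_zero
    · rw [hp_fixed]
      exact (ha _).1.ne'
  have hsum := sum_mul_fract_eq_half_of_sigmaP_eq_zero a c ha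
    (tendsto_atTop_mono (fun k => (Nat.le_succ k).trans (hp_gt k).le) tendsto_id) hpa
    fun k => h (p k) (by linarith [hp_gt k])
      (Nat.coprime_one_add_mul_of_dvd (dvd_trans (dvd_mul_right _ _) hdvd) _)
      (Nat.coprime_one_add_mul_of_dvd (dvd_trans (dvd_mul_left _ _) hdvd) _)
  have hconst (k : ℕ) : ∑ j : Fin s, c (Fin.castAdd t j) * Int.fract (p k * a (Fin.castAdd t j)) =
      ∑ j : Fin s, c (Fin.castAdd t j) * Int.fract (p 0 * a (Fin.castAdd t j)) := by
    have hk := hsum k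
    have h0 := hsum 0
    simp only [Fin.sum_univ_add, hp_fixed] at hk h0
    linarith
  obtain ⟨k, hk⟩ := exists_sum_mul_fract_add_ne (c := fun j => c (Fin.castAdd t j))
    (x := fun j => p 0 * a (Fin.castAdd t j)) (fun j => hc _) (fun j => hpa 0 _)
    (intIndependentModOne_natCast_mul (α := fun j => a (Fin.castLE hsr j)) hind hM.ne')
  refine hk (Eq.trans (sum_congr rfl fun j _ => ?_) (hconst k))
  rw [show Fin.castLE hsr j = Fin.castAdd t j from rfl]
  simp only [p]
  push_cast
  ring_nf

/-- if `σ = ∑ cᵢ S_{aᵢ}` (with `a₁,…,a_s` irrational, the rest rational, all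
distinct, all `cᵢ ≠ 0`) satisfies `Σ_p(σ) = 0` for every `p > 1` coprime to `m` and `m+1`,
then `a₁, …, a_s, 1` are linearly dependent over `ℚ`. -/
theorem stmt_4 (m : ℕ) (hm : 1 ≤ m) (r s : ℕ) (hs : 1 ≤ s) (hsr : s ≤ r)
    (a : Fin r → ℝ) (hainj : Function.Injective a)
    (hmem : ∀ i, a i ∈ Set.Ioo (0 : ℝ) (1 / 2))
    (hirr : ∀ i : Fin r, (i : ℕ) < s → Irrational (a i))
    (hrat : ∀ i : Fin r, s ≤ (i : ℕ) → ∃ q : ℚ, a i = (q : ℝ))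
    (c : Fin r → ℝ) (hc : ∀ i, c i ≠ 0)
    (h : ∀ p : ℕ, 1 < p → Nat.Coprime p m → Nat.Coprime p (m + 1) →
      SigmaP p (fun x => ∑ i, c i * SFn (a i) x) = 0) :
    ∃ (q : Fin s → ℚ) (q0 : ℚ), ¬ (q0 = 0 ∧ ∀ i, q i = 0) ∧
      (∑ i : Fin s, (q i : ℝ) * a (Fin.castLE hsr i)) + (q0 : ℝ) = 0 :=
  stmt_4_general m hm r s hs hsr a hmem hirr hrat c hc h
end

section
/- Let d > 1 be an odd integer with 𝔻(d) ≠ 0. Let a_1, …, a_{(d−1)/2} be real numbers and set σ = ∑_{j=1}^{(d−1)/2} a_j S_{j/d}. If Σ_p(σ) = ∑_{i=1}^{p−1} σ(i/p) = 0 for every odd integer p > 1, then a_j = 0 for all j (hence σ = 0). -/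
open Classical in
/-- `F_p(a) = 2⟨pa⟩ − 1` if `pa ∉ ℤ`, and `0` if `pa ∈ ℤ`. -/
noncomputable def Ffn (p : ℤ) (a : ℝ) : ℝ :=
  if ∃ k : ℤ, (p : ℝ) * a = (k : ℝ) then 0 else 2 * Int.fract ((p : ℝ) * a) - 1

/-- The `((d−1)/2) × ((d−1)/2)` matrix with `(i,j)` entry `F_i(j/d)`, `1 ≤ i,j ≤ (d−1)/2`. -/
noncomputable def Dmat (d : ℕ) : Matrix (Fin ((d - 1) / 2)) (Fin ((d - 1) / 2)) ℝ :=
  fun i j => Ffn ((i : ℕ) + 1 : ℤ) (((j : ℕ) + 1 : ℝ) / (d : ℝ))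

/-- `𝔻(d)`, the determinant of `Dmat d`. -/
noncomputable def Ddet (d : ℕ) : ℝ := (Dmat d).det

/-!
Reflecting `x ↦ 1 - x` turns `χ_{1-a}` into `1 - χ_a`, and counting the points `i/p` below `a`
gives `Σ_p(S_a) = p (1 - 2a) + F_p(a)` for `0 < a < 1`. Hence `Σ_p(σ) = p C + ∑ a_j F_p(j/d)`
with `C = ∑ a_j (1 - 2j/d)`. As `F_p(j/d)` only depends on `p mod d`, comparing `p = 3` with
`p = 3 + 2d` gives `C = 0`. Since `d` is odd, every residue class mod `d` contains an odd `p > 1`,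
so `a` lies in the kernel of the matrix `(F_i(j/d))`, which is invertible as `𝔻(d) ≠ 0`.
-/
theorem chiFn_eq_add (a x : ℝ) :
    chiFn a x = (if x < a then 1 else 0) + if x = a then 1 / 2 else 0 := by
  unfold chiFn
  split_ifs <;> grind

theorem chiFn_one_sub (a x : ℝ) : chiFn (1 - a) x = 1 - chiFn a (1 - x) := by
  simp only [chiFn_eq_add]
  split_ifs <;> grind

theorem SigmaP_sub (p : ℕ) (f g : ℝ → ℝ) :
    SigmaP p (fun x => f x - g x) = SigmaP p f - SigmaP p g :=
  Finset.sum_sub_distrib ..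

theorem SigmaP_one_sub {p : ℕ} (hp : 1 ≤ p) (f : ℝ → ℝ) :
    SigmaP p (fun x => 1 - f x) = p - 1 - SigmaP p f := by
  rw [SigmaP_sub, SigmaP, SigmaP, Finset.sum_const, Nat.card_Ico, nsmul_one, Nat.cast_sub hp,
    Nat.cast_one]

theorem SigmaP_comp_one_sub (p : ℕ) (f : ℝ → ℝ) :
    SigmaP p (fun x => f (1 - x)) = SigmaP p f := by
  have hsymm :=
    Finset.sum_Ico_reflect (fun i : ℕ => f ((i : ℝ) / p)) 1 (Nat.le_succ p)
  rw [Nat.add_sub_cancel, Nat.add_sub_cancel_left] at hsymm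
  rw [SigmaP, SigmaP, ← hsymm]
  refine Finset.sum_congr rfl fun i hi => ?_
  have hip : i ≤ p := (Finset.mem_Ico.mp hi).2.le
  have hp : (p : ℝ) ≠ 0 := by
    have := (Finset.mem_Ico.mp hi).1; exact_mod_cast (by omega : p ≠ 0)
  rw [Nat.cast_sub hip, sub_div, div_self hp]

theorem SigmaP_sum_mul {ι : Type*} [Fintype ι] (p : ℕ) (c : ι → ℝ) (f : ι → ℝ → ℝ) :
    SigmaP p (fun x => ∑ j, c j * f j x) = ∑ j, c j * SigmaP p (f j) := by
  simp only [SigmaP, Finset.mul_sum]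
  exact Finset.sum_comm

open Classical in
theorem SigmaP_chiFn {p : ℕ} (hp : 1 ≤ p) {a : ℝ} (ha₀ : 0 < a) (ha₁ : a < 1) :
    SigmaP p (chiFn a) =
      ⌈(p : ℝ) * a⌉ - 1 + if ∃ k : ℤ, (p : ℝ) * a = k then 1 / 2 else 0 := by
  have hpR : (0 : ℝ) < p := by exact_mod_cast hp
  have hlt (i : ℕ) : (i : ℝ) / p < a ↔ i < ⌈(p : ℝ) * a⌉₊ := by
    rw [Nat.lt_ceil, div_lt_iff₀ hpR, mul_comm]
  have heq (i : ℕ) : (i : ℝ) / p = a ↔ (i : ℝ) = p * a := by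
    rw [div_eq_iff hpR.ne', mul_comm]
  have hceil_pos : 0 < ⌈(p : ℝ) * a⌉₊ := Nat.ceil_pos.mpr (by positivity)
  have hceil_le : ⌈(p : ℝ) * a⌉₊ ≤ p := Nat.ceil_le.mpr (by nlinarith)
  have hbelow : ∑ i ∈ Finset.Ico 1 p, (if (i : ℝ) / p < a then (1 : ℝ) else 0) =
      ⌈(p : ℝ) * a⌉ - 1 := by
    simp only [hlt]
    rw [Finset.sum_boole, ← natCast_ceil_eq_intCast_ceil (by positivity)]
    have : {i ∈ Finset.Ico 1 p | i < ⌈(p : ℝ) * a⌉₊} = Finset.Ico 1 ⌈(p : ℝ) * a⌉₊ := by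
      ext i; simp only [Finset.mem_filter, Finset.mem_Ico]; omega
    rw [this, Nat.card_Ico, Nat.cast_sub hceil_pos]
    simp
  have hat : ∑ i ∈ Finset.Ico 1 p, (if (i : ℝ) / p = a then (1 / 2 : ℝ) else 0) =
      if ∃ k : ℤ, (p : ℝ) * a = k then 1 / 2 else 0 := by
    simp only [heq]
    split_ifs with hint
    · obtain ⟨k, hk⟩ := hint
      have hk₀ : (0 : ℝ) < k := hk ▸ by positivity
      have hkp : (k : ℝ) < p := hk ▸ by nlinarith
      lift k to ℕ using by exact_mod_cast hk₀.le
      push_cast at hk hk₀ hkp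
      simp only [hk, Nat.cast_inj, Finset.sum_ite_eq', Finset.mem_Ico]
      rw [if_pos ⟨by exact_mod_cast hk₀, by exact_mod_cast hkp⟩]
    · refine Finset.sum_eq_zero fun i _ => if_neg fun hi => hint ⟨i, by simp [← hi]⟩
  rw [SigmaP, ← hbelow, ← hat, ← Finset.sum_add_distrib]
  exact Finset.sum_congr rfl fun i _ => chiFn_eq_add a _

theorem SigmaP_SFn {p : ℕ} (hp : 1 ≤ p) {a : ℝ} (ha₀ : 0 < a) (ha₁ : a < 1) :
    SigmaP p (SFn a) = p * (1 - 2 * a) + Ffn p a := by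
  have hreflect : SigmaP p (SFn a) = p - 1 - 2 * SigmaP p (chiFn a) := by
    rw [show SFn a = fun x => 1 - chiFn a (1 - x) - chiFn a x from
      funext fun x => by rw [SFn, chiFn_one_sub]]
    rw [SigmaP_sub, SigmaP_one_sub hp, SigmaP_comp_one_sub p (chiFn a)]
    ring
  rw [hreflect, SigmaP_chiFn hp ha₀ ha₁, Ffn, Int.cast_natCast]
  split_ifs with hint
  · obtain ⟨k, hk⟩ := hint
    rw [hk, Int.ceil_intCast]
    linarith
  · have hfract : Int.fract ((p : ℝ) * a) ≠ 0 := fun h0 =>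
      hint (by simpa [eq_comm] using Int.fract_eq_zero_iff.mp h0)
    rw [Int.ceil_eq_add_one_sub_fract hfract]
    ring

theorem SigmaP_sum_mul_SFn {ι : Type*} [Fintype ι] {p : ℕ} (hp : 1 ≤ p) (c x : ι → ℝ)
    (hx : ∀ j, 0 < x j ∧ x j < 1) :
    SigmaP p (fun y => ∑ j, c j * SFn (x j) y) =
      p * ∑ j, c j * (1 - 2 * x j) + ∑ j, c j * Ffn p (x j) := by
  rw [SigmaP_sum_mul, Finset.mul_sum, ← Finset.sum_add_distrib]
  refine Finset.sum_congr rfl fun j _ => ?_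
  rw [SigmaP_SFn hp (hx j).1 (hx j).2]
  ring

open Classical in
theorem Ffn_add_of_mul_eq_intCast (p n : ℤ) {a : ℝ} (k : ℤ) (hk : (n : ℝ) * a = k) :
    Ffn (p + n) a = Ffn p a := by
  have hshift : ((p + n : ℤ) : ℝ) * a = (p : ℝ) * a + k := by push_cast; rw [← hk]; ring
  have hint : (∃ m : ℤ, (p : ℝ) * a + k = m) ↔ ∃ m : ℤ, (p : ℝ) * a = m :=
    ⟨fun ⟨m, hm⟩ => ⟨m - k, by push_cast; linarith⟩,
      fun ⟨m, hm⟩ => ⟨m + k, by push_cast; linarith⟩⟩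
  unfold Ffn
  rw [hshift, Int.fract_add_intCast, if_congr hint rfl rfl]

theorem exists_one_lt_odd_add_mul {d : ℕ} (hd : Odd d) (q : ℕ) :
    ∃ t, 1 < q + t * d ∧ Odd (q + t * d) := by
  obtain ⟨m, rfl⟩ := hd
  rcases Nat.even_or_odd q with ⟨r, rfl⟩ | ⟨r, rfl⟩
  · exact ⟨3, by omega, r + 3 * m + 1, by ring⟩
  · exact ⟨2, by omega, r + 2 * m + 1, by ring⟩

theorem eq_zero_of_odd_mul_add_periodic {d : ℕ} (hd : Odd d) {C : ℝ} {G : ℕ → ℝ}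
    (hG : ∀ p t, G (p + t * d) = G p) (h : ∀ p, 1 < p → Odd p → p * C + G p = 0) :
    C = 0 ∧ ∀ q, G q = 0 := by
  have hC : C = 0 := by
    have hodd3 : Odd 3 := ⟨1, rfl⟩
    have h3 := h 3 (by norm_num) hodd3
    have h3' := h (3 + 2 * d) (by omega) (hodd3.add_even (even_two_mul d))
    rw [hG] at h3'
    push_cast at h3 h3'
    have h2dC : 2 * (d : ℝ) * C = 0 := by linarith
    exact (mul_eq_zero.mp h2dC).resolve_left (by have := hd.pos; positivity)
  refine ⟨hC, fun q => ?_⟩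
  obtain ⟨t, ht, hto⟩ := exists_one_lt_odd_add_mul hd q
  simpa [hC, hG] using h _ ht hto

theorem stmt_5_general (d : ℕ) (hodd : Odd d) (hD : Ddet d ≠ 0)
    (a : Fin ((d - 1) / 2) → ℝ)
    (h : ∀ p : ℕ, 1 < p → Odd p →
      SigmaP p (fun x => ∑ j, a j * SFn (((j : ℕ) + 1 : ℝ) / (d : ℝ)) x) = 0) :
    ∀ j, a j = 0 := by
  set x : Fin ((d - 1) / 2) → ℝ := fun j => ((j : ℕ) + 1 : ℝ) / d
  have hd : (0 : ℝ) < d := by exact_mod_cast hodd.pos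
  have hx (j : Fin ((d - 1) / 2)) : 0 < x j ∧ x j < 1 := by
    refine ⟨by positivity, (div_lt_one hd).mpr ?_⟩
    exact_mod_cast (by omega : (j : ℕ) + 1 < d)
  have hper (p t : ℕ) (j : Fin ((d - 1) / 2)) :
      Ffn ((p + t * d : ℕ) : ℤ) (x j) = Ffn p (x j) := by
    push_cast
    refine Ffn_add_of_mul_eq_intCast _ _ (t * ((j : ℕ) + 1)) ?_
    simp only [x]
    push_cast
    field_simp
  obtain ⟨-, hrow⟩ := eq_zero_of_odd_mul_add_periodic hodd
    (G := fun p => ∑ j, a j * Ffn p (x j)) (fun p t => by simp only [hper])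
    fun p hp hpo => by rw [← h p hp hpo, SigmaP_sum_mul_SFn hp.le a x hx]
  have hker : (Dmat d).mulVec a = 0 := by
    funext i
    rw [Pi.zero_apply, ← hrow ((i : ℕ) + 1)]
    simp [Matrix.mulVec, dotProduct, Dmat, mul_comm, x]
  exact fun j => congrFun (Matrix.eq_zero_of_mulVec_eq_zero hD hker) j

/-- if `d > 1` is odd with `𝔻(d) ≠ 0` and `σ = ∑_j a_j S_{j/d}` satisfies
`Σ_p(σ) = 0` for every odd `p > 1`, then all `a_j = 0`. -/
theorem stmt_5 (d : ℕ) (hd : 1 < d) (hodd : Odd d) (hD : Ddet d ≠ 0)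
    (a : Fin ((d - 1) / 2) → ℝ)
    (h : ∀ p : ℕ, 1 < p → Odd p →
      SigmaP p (fun x => ∑ j, a j * SFn (((j : ℕ) + 1 : ℝ) / (d : ℝ)) x) = 0) :
    ∀ j, a j = 0 :=
  stmt_5_general d hodd hD a h
end

section
/- Let a_1, …, a_s be real numbers such that 1, a_1, …, a_s are linearly independent over ℚ. Let D ≥ 1 and b be integers, and let N = { b + kD : k ∈ ℕ } ∩ ℤ_{>0} be the corresponding arithmetic progression of positive integers. Then the set { ( ⟨p a_1⟩, ⟨p a_2⟩, …, ⟨p a_s⟩ ) : p ∈ N } is dense in the cube [0,1]^s. -/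
/-!
Along the progression `p = p₀ + kD` the points `p • a` modulo `ℤˢ` form the orbit of `p₀ • a` under
translation by `w = D • a` on the torus. Along such an orbit the Birkhoff averages of a character
`mFourier n` are a geometric progression with ratio `mFourier n w`, so they tend to `0` unless
`mFourier n w = 1`, which the linear independence of `1, a₁, …, a_s` forbids for `n ≠ 0`. Hence the
averages of every trigonometric polynomial tend to its Haar integral, and by Stone–Weierstrass every
continuous function vanishing on the orbit has integral zero; a Urysohn function vanishing on the
orbit closure but not at a point outside it would have positive integral. Finally, `Int.fract`
inverts the quotient map continuously on the open unit cube, whose closure is `[0,1]ˢ`.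
-/

open Filter Topology MeasureTheory Set UnitAddTorus

section Equidistribution

theorem norm_birkhoffAverage_le {α 𝕜 E : Type*} [RCLike 𝕜] [NormedAddCommGroup E]
    [NormedSpace 𝕜 E] {f : α → α} {g : α → E} {x : α} {C : ℝ} (hC : 0 ≤ C)
    (hg : ∀ k, ‖g (f^[k] x)‖ ≤ C) (n : ℕ) : ‖birkhoffAverage 𝕜 f g n x‖ ≤ C := by
  rcases n.eq_zero_or_pos with rfl | hn
  · simpa using hC
  rw [birkhoffAverage, birkhoffSum, norm_smul, norm_inv, RCLike.norm_natCast,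
    inv_mul_le_iff₀ (by positivity)]
  calc ‖∑ k ∈ Finset.range n, g (f^[k] x)‖ ≤ ∑ _k ∈ Finset.range n, C :=
        norm_sum_le_of_le _ fun k _ => hg k
    _ = n * C := by simp

variable {X : Type*} [TopologicalSpace X] [CompactSpace X] [MeasurableSpace X]
  [OpensMeasurableSpace X] (μ : Measure X) [IsFiniteMeasure μ] {f : X → X} {x : X}

theorem ContinuousMap.integrable_of_compactSpace (g : C(X, ℂ)) : Integrable g μ :=
  g.continuous.integrable_of_hasCompactSupport (HasCompactSupport.of_compactSpace _)

theorem tendsto_birkhoffAverage_of_mem_span {T : Set C(X, ℂ)}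
    (hT : ∀ g ∈ T, Tendsto (birkhoffAverage ℂ f g · x) atTop (𝓝 (∫ y, g y ∂μ)))
    {g : C(X, ℂ)} (hg : g ∈ Submodule.span ℂ T) :
    Tendsto (birkhoffAverage ℂ f g · x) atTop (𝓝 (∫ y, g y ∂μ)) := by
  induction hg using Submodule.span_induction with
  | mem g hg => exact hT g hg
  | zero => simp [birkhoffAverage, birkhoffSum]
  | add g h _ _ hg hh =>
    simpa [birkhoffAverage_add, integral_add (g.integrable_of_compactSpace μ)
      (h.integrable_of_compactSpace μ)] using hg.add hh
  | smul c g _ hg =>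
    simpa [birkhoffAverage, birkhoffSum, Finset.mul_sum, integral_const_mul, mul_left_comm c]
      using hg.const_mul c

theorem integral_eq_zero_of_tendsto_birkhoffAverage {S : Submodule ℂ C(X, ℂ)}
    (hS : S.topologicalClosure = ⊤)
    (hlim : ∀ g ∈ S, Tendsto (birkhoffAverage ℂ f g · x) atTop (𝓝 (∫ y, g y ∂μ)))
    {F : C(X, ℂ)} (hF : ∀ k, F (f^[k] x) = 0) : ∫ y, F y ∂μ = 0 := by
  have hbound : ∀ g ∈ S, ‖∫ y, F y ∂μ‖ ≤ (μ.real univ + 1) * dist F g := by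
    intro g hg
    have hg_int : ‖∫ y, g y ∂μ‖ ≤ dist F g := by
      refine le_of_tendsto' (hlim g hg).norm (norm_birkhoffAverage_le dist_nonneg fun k => ?_)
      simpa [hF k, dist_eq_norm] using ContinuousMap.dist_apply_le_dist (f := F) (g := g) (f^[k] x)
    have hFg_int : ‖∫ y, F y ∂μ - ∫ y, g y ∂μ‖ ≤ dist F g * μ.real univ := by
      rw [← integral_sub (F.integrable_of_compactSpace μ) (g.integrable_of_compactSpace μ)]
      refine norm_integral_le_of_norm_le_const (Eventually.of_forall fun y => ?_)
      simpa [dist_eq_norm] using ContinuousMap.dist_apply_le_dist (f := F) (g := g) y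
    calc ‖∫ y, F y ∂μ‖ ≤ ‖∫ y, F y ∂μ - ∫ y, g y ∂μ‖ + ‖∫ y, g y ∂μ‖ := norm_le_norm_sub_add _ _
      _ ≤ (μ.real univ + 1) * dist F g := by linarith
  have hF_mem : F ∈ closure (S : Set C(X, ℂ)) := by
    rw [← S.topologicalClosure_coe, hS]
    trivial
  have hF_bound : ‖∫ y, F y ∂μ‖ ≤ (μ.real univ + 1) * dist F F := closure_minimal hbound
    (isClosed_le continuous_const (continuous_const.mul (continuous_const.dist continuous_id)))
    hF_mem
  simpa using hF_bound

theorem denseRange_iterate_of_tendsto_birkhoffAverage [T2Space X] [μ.IsOpenPosMeasure]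
    {T : Set C(X, ℂ)} (hT : (Submodule.span ℂ T).topologicalClosure = ⊤)
    (hlim : ∀ g ∈ T, Tendsto (birkhoffAverage ℂ f g · x) atTop (𝓝 (∫ y, g y ∂μ))) :
    DenseRange fun k : ℕ => f^[k] x := by
  intro y
  by_contra hy
  obtain ⟨φ, hφ_orbit, hφ_y, hφ_mem⟩ := exists_continuous_zero_one_of_isClosed isClosed_closure
    isClosed_singleton (disjoint_singleton_right.mpr hy)
  have hpos : 0 < ∫ z, φ z ∂μ :=
    φ.continuous.integral_pos_of_hasCompactSupport_nonneg_nonzero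
      (HasCompactSupport.of_compactSpace _) (fun z => (hφ_mem z).1) (x := y) (by simp [hφ_y rfl])
  have hzero : ∫ z, ((φ z : ℝ) : ℂ) ∂μ = 0 :=
    integral_eq_zero_of_tendsto_birkhoffAverage μ hT
      (fun g hg => tendsto_birkhoffAverage_of_mem_span μ hlim hg)
      (F := ⟨fun z => (φ z : ℂ), by fun_prop⟩)
      fun k => by simpa using hφ_orbit (subset_closure (mem_range_self k))
  rw [integral_complex_ofReal, Complex.ofReal_eq_zero] at hzero
  exact hpos.ne' hzero

end Equidistribution

theorem AddCircle.integral_fourier_haarAddCircle {T : ℝ} [Fact (0 < T)] (n : ℤ) :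
    ∫ x, fourier n x ∂(AddCircle.haarAddCircle (T := T)) = if n = 0 then 1 else 0 := by
  simpa [fourierCoeff, fourier_zero, Pi.single_apply, eq_comm] using
    congrFun (fourierCoeff_fourier (T := T) n) 0

theorem Complex.tendsto_cesaro_pow_of_norm_eq_one {r : ℂ} (hr : ‖r‖ = 1) (hr1 : r ≠ 1) :
    Tendsto (fun n : ℕ => (n : ℂ)⁻¹ * ∑ k ∈ Finset.range n, r ^ k) atTop (𝓝 0) := by
  have hbound : ∀ n : ℕ,
      ‖(n : ℂ)⁻¹ * ∑ k ∈ Finset.range n, r ^ k‖ ≤ 2 / ‖r - 1‖ * (n : ℝ)⁻¹ := by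
    intro n
    have hpow : ‖r ^ n - 1‖ ≤ 2 := by
      calc ‖r ^ n - 1‖ ≤ ‖r ^ n‖ + ‖(1 : ℂ)‖ := norm_sub_le _ _
        _ = 2 := by rw [norm_pow, hr]; norm_num
    rw [geom_sum_eq hr1, norm_mul, norm_div, norm_inv, Complex.norm_natCast, mul_comm]
    gcongr
  exact squeeze_zero_norm hbound
    (by simpa using tendsto_inv_atTop_nhds_zero_nat.const_mul (2 / ‖r - 1‖))

namespace UnitAddTorus

theorem Icc_subset_closure_range_fract {d : Type*} {u : ℕ → d → ℝ}
    (hu : DenseRange fun k i => (u k i : UnitAddCircle)) :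
    Icc 0 1 ⊆ closure (range fun k i => Int.fract (u k i)) := by
  have hIcc : Icc (0 : d → ℝ) 1 = closure (univ.pi fun _ => Ioo 0 1) := by
    rw [closure_pi_set, ← pi_univ_Icc]
    simp [closure_Ioo zero_ne_one]
  rw [hIcc]
  refine closure_minimal (fun v hv => ?_) isClosed_closure
  let ρ : UnitAddTorus d → d → ℝ := fun y i => AddCircle.equivIco 1 0 (y i)
  have hρ_coe : ∀ t : d → ℝ, ρ (fun i => (t i : UnitAddCircle)) = fun i => Int.fract (t i) := by
    intro t; ext i; simp [ρ]
  have hρ_cont : ContinuousAt ρ fun i => (v i : UnitAddCircle) := by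
    refine continuousAt_pi.2 fun i => continuous_subtype_val.continuousAt.comp ?_
    refine ContinuousAt.comp (f := fun y : UnitAddTorus d => y i)
      (AddCircle.continuousAt_equivIco 1 0 ?_) (continuous_apply i).continuousAt
    have hvi := hv i (mem_univ i)
    rw [Ne, AddCircle.coe_zero, AddCircle.coe_eq_zero_iff_of_mem_Ico ⟨hvi.1.le, hvi.2⟩]
    exact hvi.1.ne'
  have hv_fract : (fun i => Int.fract (v i)) = v :=
    funext fun i => Int.fract_eq_self.2 ⟨(hv i (mem_univ i)).1.le, (hv i (mem_univ i)).2⟩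
  have := hρ_cont.continuousWithinAt.mem_closure_image (hu _)
  simpa only [← range_comp, Function.comp_def, hρ_coe, hv_fract] using this

variable {d : Type*} [Fintype d]

noncomputable abbrev haar (d : Type*) [Fintype d] : Measure (UnitAddTorus d) :=
  Measure.pi fun _ => AddCircle.haarAddCircle

theorem integral_mFourier (n : d → ℤ) :
    ∫ x, mFourier n x ∂haar d = if n = 0 then 1 else 0 := by
  simp only [mFourier, ContinuousMap.coe_mk]
  rw [integral_fintype_prod_eq_prod]
  simp_rw [AddCircle.integral_fourier_haarAddCircle, Finset.prod_ite_zero, Finset.prod_const_one]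
  simp [funext_iff]

theorem mFourier_add_nsmul (n : d → ℤ) (x w : UnitAddTorus d) (k : ℕ) :
    mFourier n (x + k • w) = mFourier n x * mFourier n w ^ k := by
  simp only [mFourier, ContinuousMap.coe_mk, Pi.add_apply, Pi.smul_apply, fourier_apply,
    smul_add, smul_comm (n _) k, AddCircle.toCircle_add, AddCircle.toCircle_nsmul, Circle.coe_mul,
    Circle.coe_pow, Finset.prod_mul_distrib, Finset.prod_pow]

theorem mFourier_coe_eq_one_iff (n : d → ℤ) (t : d → ℝ) :
    mFourier n (fun i => (t i : UnitAddCircle)) = 1 ↔ ∃ m : ℤ, ∑ i, n i * t i = m := by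
  simp only [mFourier, ContinuousMap.coe_mk, fourier_coe_apply, ← Complex.exp_sum,
    Complex.exp_eq_one_iff]
  refine exists_congr fun m => ?_
  have h2πI : 2 * (Real.pi : ℂ) * Complex.I ≠ 0 := by simp [Real.pi_ne_zero]
  simp_rw [Complex.ofReal_one, div_one, mul_assoc (2 * (Real.pi : ℂ) * Complex.I),
    ← Finset.mul_sum, mul_comm _ (2 * (Real.pi : ℂ) * Complex.I), mul_right_inj' h2πI]
  norm_cast

theorem tendsto_birkhoffAverage_mFourier {w : UnitAddTorus d} (hw : ∀ n ≠ 0, mFourier n w ≠ 1)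
    (n : d → ℤ) (x : UnitAddTorus d) :
    Tendsto (birkhoffAverage ℂ (· + w) (mFourier n) · x) atTop
      (𝓝 (∫ y, mFourier n y ∂haar d)) := by
  have haverage : ∀ K : ℕ, birkhoffAverage ℂ (· + w) (mFourier n) K x =
      mFourier n x * ((K : ℂ)⁻¹ * ∑ k ∈ Finset.range K, mFourier n w ^ k) := by
    intro K
    simp only [birkhoffAverage, birkhoffSum, add_right_iterate_apply, mFourier_add_nsmul,
      ← Finset.mul_sum, smul_eq_mul]
    ring
  simp_rw [haverage, integral_mFourier]
  split_ifs with hn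
  · subst hn
    refine tendsto_const_nhds.congr' ?_
    filter_upwards [eventually_ne_atTop 0] with K hK
    simp [mFourier_zero, hK]
  · have hnorm : ‖mFourier n w‖ = 1 := by simp [mFourier, Circle.norm_coe]
    simpa using (Complex.tendsto_cesaro_pow_of_norm_eq_one hnorm (hw n hn)).const_mul (mFourier n x)

theorem denseRange_add_nsmul {w : UnitAddTorus d} (hw : ∀ n ≠ 0, mFourier n w ≠ 1)
    (x : UnitAddTorus d) : DenseRange fun k : ℕ => x + k • w := by
  simpa only [add_right_iterate_apply] using
    denseRange_iterate_of_tendsto_birkhoffAverage (haar d) span_mFourier_closure_eq_top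
      (f := (· + w)) (x := x) (by rintro _ ⟨n, rfl⟩; exact tendsto_birkhoffAverage_mFourier hw n x)

theorem denseRange_coe_add_mul {t w : d → ℝ}
    (hw : ∀ n ≠ 0, mFourier n (fun i => (w i : UnitAddCircle)) ≠ 1) :
    DenseRange fun (k : ℕ) i => ((t i + k * w i : ℝ) : UnitAddCircle) := by
  convert denseRange_add_nsmul hw fun i => (t i : UnitAddCircle) using 2 with k
  ext i
  simp [← nsmul_eq_mul]

end UnitAddTorus

theorem LinearIndependent.sum_intCast_mul_ne_intCast {s : ℕ} {a : Fin s → ℝ}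
    (hli : LinearIndependent ℚ (Fin.cons 1 a : Fin (s + 1) → ℝ)) {n : Fin s → ℤ} (hn : n ≠ 0)
    (m : ℤ) : ∑ i, (n i : ℝ) * a i ≠ m := by
  intro h
  obtain ⟨i, hi⟩ := Function.ne_iff.mp hn
  have hcoeff := Fintype.linearIndependent_iff.mp hli (Fin.cons (-m : ℚ) fun i => (n i : ℚ))
    (by simp [Fin.sum_univ_succ, Rat.smul_def, h]) i.succ
  exact hi (by simpa using hcoeff)

theorem LinearIndependent.mFourier_coe_natCast_mul_ne_one {s : ℕ} {a : Fin s → ℝ}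
    (hli : LinearIndependent ℚ (Fin.cons 1 a : Fin (s + 1) → ℝ)) {D : ℕ} (hD : D ≠ 0)
    {n : Fin s → ℤ} (hn : n ≠ 0) : mFourier n (fun i => ((D * a i : ℝ) : UnitAddCircle)) ≠ 1 := by
  rw [Ne, mFourier_coe_eq_one_iff, not_exists]
  intro m hm
  refine hli.sum_intCast_mul_ne_intCast (n := D • n) (smul_ne_zero hD hn) m ?_
  simpa [mul_left_comm, mul_assoc] using hm

/-- Kronecker's theorem along an arithmetic progression: if `1, a₁, …, a_s`
are linearly independent over `ℚ`, then the fractional parts `(⟨p a₁⟩, …, ⟨p a_s⟩)` for `p`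
ranging over the positive integers of the form `b + kD` (`k ∈ ℕ`) are dense in `[0,1]^s`. -/
theorem stmt_6 (s : ℕ) (a : Fin s → ℝ)
    (hli : LinearIndependent ℚ (Fin.cons 1 a : Fin (s + 1) → ℝ))
    (D : ℕ) (hD : 1 ≤ D) (b : ℤ) :
    Set.Icc (0 : Fin s → ℝ) 1 ⊆
      closure {v : Fin s → ℝ | ∃ p : ℕ, 0 < p ∧ (∃ k : ℕ, (p : ℤ) = b + k * D) ∧
        v = fun i => Int.fract ((p : ℝ) * a i)} := by
  obtain ⟨k₀, hk₀⟩ : ∃ k₀ : ℕ, 0 < b + k₀ * D :=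
    ⟨(1 - b).toNat, by nlinarith [Int.self_le_toNat (1 - b), (by exact_mod_cast hD : (1 : ℤ) ≤ D)]⟩
  obtain ⟨p₀, hp₀⟩ : ∃ p₀ : ℕ, (p₀ : ℤ) = b + k₀ * D := ⟨_, Int.toNat_of_nonneg hk₀.le⟩
  have hdense := denseRange_coe_add_mul (t := fun i => p₀ * a i)
    fun n hn => hli.mFourier_coe_natCast_mul_ne_one (D := D) (by omega) hn
  refine (Icc_subset_closure_range_fract hdense).trans (closure_mono ?_)
  rintro _ ⟨k, rfl⟩
  refine ⟨p₀ + k * D, by omega, ⟨k₀ + k, by push_cast; linarith⟩, ?_⟩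
  ext i
  push_cast
  ring_nf
end

section
/- Let R be a commutative ring, let q ≥ 1 and n ≥ 1 be integers, let Λ = R[X]/(X^q − 1), and let t ∈ Λ denote the class of X. Let Γ be an n × n matrix over R, viewed as a matrix over Λ via the canonical ring map R → Λ, and let A = Γ + t·(I − Γ), an n × n matrix over Λ. Then for every z ∈ Λⁿ, the vector (Γ^q − (Γ − I)^q)·z lies in the image of the linear map Λⁿ → Λⁿ given by A; equivalently, the matrix Γ^q − (Γ − I)^q acts as zero on the quotient module Λⁿ / A·Λⁿ. -/
/-- `Λ = R[X]/(X^q − 1)`. -/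
noncomputable abbrev LambdaRing (R : Type*) [CommRing R] (q : ℕ) :=
  Polynomial R ⧸ Ideal.span ({Polynomial.X ^ q - 1} : Set (Polynomial R))

set_option maxHeartbeats 1000000 in
theorem stmt15_aux {L : Type*} [CommRing L] (q n : ℕ) (t : L) (htq : t ^ q = 1)
    (Γ' A : Matrix (Fin n) (Fin n) L)
    (hA : A = Γ' + t • ((1 : Matrix (Fin n) (Fin n) L) - Γ'))
    (z : Fin n → L) :
    ∃ w : Fin n → L, A.mulVec w = (Γ' ^ q - (Γ' - 1) ^ q).mulVec z := by
  set b : Matrix (Fin n) (Fin n) L := t • (Γ' - 1) with hb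
  have hcomm : Commute Γ' b :=
    ((Commute.refl Γ').sub_right (Commute.one_right Γ')).smul_right t
  have hAb : A = Γ' - b := by
    rw [hA, hb, smul_sub, smul_sub]; abel
  have hbq : b ^ q = (Γ' - 1) ^ q := by
    rw [hb, smul_pow, htq, one_smul]
  refine ⟨(∑ i ∈ Finset.range q, Γ' ^ i * b ^ (q - 1 - i)).mulVec z, ?_⟩
  rw [Matrix.mulVec_mulVec, hAb, hcomm.mul_geom_sum₂, hbq]

set_option maxHeartbeats 1000000 in
set_option synthInstance.maxHeartbeats 400000 in
/-- in `Λ = R[X]/(X^q−1)` with `t` the class of `X`, for any `n × n` matrix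
`Γ` over `R` (viewed in `Λ` as `Γ'`) and `A = Γ' + t(I − Γ')`, the matrix
`Γ'^q − (Γ' − I)^q` maps every vector of `Λⁿ` into the image of `A`. -/
theorem stmt_15 (R : Type*) [CommRing R] (q n : ℕ) (hq : 1 ≤ q) (hn : 1 ≤ n)
    (Γ : Matrix (Fin n) (Fin n) R)
    (t : LambdaRing R q)
    (ht : t = Ideal.Quotient.mk (Ideal.span ({Polynomial.X ^ q - 1} : Set (Polynomial R)))
      Polynomial.X)
    (Γ' : Matrix (Fin n) (Fin n) (LambdaRing R q))
    (hΓ' : Γ' = Γ.map (algebraMap R (LambdaRing R q)))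
    (A : Matrix (Fin n) (Fin n) (LambdaRing R q))
    (hA : A = Γ' + t • ((1 : Matrix (Fin n) (Fin n) (LambdaRing R q)) - Γ')) :
    ∀ z : Fin n → LambdaRing R q,
      ∃ w : Fin n → LambdaRing R q, A.mulVec w = (Γ' ^ q - (Γ' - 1) ^ q).mulVec z := by
  intro z
  have htq : t ^ q = 1 := by
    rw [ht, ← map_pow, ← sub_eq_zero, ← map_one (Ideal.Quotient.mk _), ← map_sub,
      Ideal.Quotient.eq_zero_iff_mem]
    exact Ideal.subset_span rfl
  exact stmt15_aux q n t htq Γ' A hA z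
end

section
/- Let M be an abelian group, let q ≥ 1 be an integer, and let Γ : M → M be a group endomorphism satisfying Γ^q = (Γ − id)^q in the endomorphism ring of M (powers taken under composition). Then both Γ and Γ − id are automorphisms of M. -/
open Polynomial

lemma unit_bij {M : Type*} [AddCommGroup M] {f : AddMonoid.End M} (hf : IsUnit f) :
    Function.Bijective (f : M → M) := by
  obtain ⟨u, rfl⟩ := hf
  refine Function.bijective_iff_has_inverse.2 ⟨((↑u⁻¹ : AddMonoid.End M) : M → M),
    fun x => ?_, fun x => ?_⟩
  · show ((↑u⁻¹ * ↑u : AddMonoid.End M)) x = x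
    rw [u.inv_mul]; rfl
  · show ((↑u * ↑u⁻¹ : AddMonoid.End M)) x = x
    rw [u.mul_inv]; rfl

lemma key_unit {M : Type*} [AddCommGroup M] (Γ : AddMonoid.End M) (p : Polynomial ℤ)
    (hp : Polynomial.aeval Γ p = 0) (a : ℤ) (ha : IsUnit (p.eval a)) :
    IsUnit (Γ - algebraMap ℤ (AddMonoid.End M) a) := by
  obtain ⟨r, hr⟩ := Polynomial.X_sub_C_dvd_sub_C_eval (a := a) (p := p)
  obtain ⟨u, hu⟩ := ha
  set c : ℤ := -(↑u⁻¹ : ℤ) with hc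
  have hCc : C (p.eval a) * C c = -1 := by
    rw [← C_mul, ← hu, hc, mul_neg, Units.mul_inv]; simp
  have key : ∀ s : Polynomial ℤ, Polynomial.aeval Γ ((X - C a) * s) =
      (Γ - algebraMap ℤ (AddMonoid.End M) a) * Polynomial.aeval Γ s := by
    intro s
    rw [map_mul, map_sub, aeval_X, aeval_C]
  have h1 : (Γ - algebraMap ℤ (AddMonoid.End M) a) * Polynomial.aeval Γ (r * C c) = 1 := by
    rw [← key, ← mul_assoc, ← hr, map_mul, map_sub, hp, zero_sub, neg_mul, ← map_mul,
      hCc, map_neg, map_one, neg_neg]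
  have h2 : Polynomial.aeval Γ (r * C c) * (Γ - algebraMap ℤ (AddMonoid.End M) a) = 1 := by
    have e1 : Polynomial.aeval Γ ((r * C c) * (X - C a))
        = Polynomial.aeval Γ (r * C c) * (Γ - algebraMap ℤ (AddMonoid.End M) a) := by
      rw [map_mul, map_sub, aeval_X, aeval_C]
    rw [← e1, mul_comm (r * C c), key, h1]
  exact ⟨⟨_, _, h1, h2⟩, rfl⟩

/-- if an endomorphism `Γ` of an abelian group `M` satisfies
`Γ^q = (Γ − id)^q` in `End(M)` for some `q ≥ 1`, then `Γ` and `Γ − id` are automorphisms. -/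
theorem stmt_16 (M : Type*) [AddCommGroup M] (q : ℕ) (hq : 1 ≤ q)
    (Γ : AddMonoid.End M) (h : Γ ^ q = (Γ - 1) ^ q) :
    Function.Bijective (Γ : M → M) ∧
    Function.Bijective ((Γ - 1 : AddMonoid.End M) : M → M) := by
  have hq0 : q ≠ 0 := by omega
  set p : Polynomial ℤ := X ^ q - (X - 1) ^ q with hpdef
  have hp : Polynomial.aeval Γ p = 0 := by
    simp [hpdef, h]
  have h0 : IsUnit (p.eval 0) := by
    have : p.eval 0 = -(-1) ^ q := by simp [hpdef, zero_pow hq0]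
    rw [this]
    exact ((isUnit_one.neg).pow q).neg
  have h1 : IsUnit (p.eval 1) := by
    have : p.eval 1 = 1 := by simp [hpdef, zero_pow hq0]
    rw [this]; exact isUnit_one
  have u0 := key_unit Γ p hp 0 h0
  have u1 := key_unit Γ p hp 1 h1
  simp only [map_zero, sub_zero, map_one] at u0 u1
  exact ⟨unit_bij u0, unit_bij u1⟩
end
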